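/- Let V be a finite-dimensional vector space over a field k and let u, v : V → V be commuting linear endomorphisms. The condition Im(v restricted to ker(u)) = Im(v) ∩ ker(u) holds if and only if the symmetric condition Im(u restricted to ker(v)) = Im(u) ∩ ker(v) holds. -/

import Mathlib

/-!
For commuting `u v`, `v` maps `ker u` into `range v ⊓ ker u`, so strictness is an equality of
dimensions. Rank–nullity for `v` on `ker u` and for `u` on `range v` turns it into
`dim ker u + dim ker v + rk (u ∘ v) = dim V + dim (ker u ⊓ ker v)`, which is symmetric in `u`
and `v`.
-/

open Module Submodule LinearMap

theorem Submodule.finrank_map_add_finrank_inf_ker {K V W : Type*} [DivisionRing K]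
    [AddCommGroup V] [Module K V] [AddCommGroup W] [Module K W]
    (f : V →ₗ[K] W) (p : Submodule K V) [FiniteDimensional K p] :
    finrank K (p.map f) + finrank K (p ⊓ ker f : Submodule K V) = finrank K p := by
  have hker : (ker f).comap p.subtype = (p ⊓ ker f).comap p.subtype := by
    rw [comap_inf, comap_subtype_self, top_inf_eq]
  have := finrank_range_add_finrank_ker (f.domRestrict p)
  rwa [range_domRestrict, ker_domRestrict, hker,
    (comapSubtypeEquivOfLe inf_le_left).finrank_eq] at this

namespace LinearMap

theorem map_ker_le_range_inf_ker_of_comp_comm {R M : Type*} [Semiring R] [AddCommMonoid M]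
    [Module R M] {u v : M →ₗ[R] M} (hcomm : u ∘ₗ v = v ∘ₗ u) :
    (ker u).map v ≤ range v ⊓ ker u := by
  rintro _ ⟨x, hx, rfl⟩
  refine ⟨mem_range_self v x, ?_⟩
  rw [SetLike.mem_coe, mem_ker, ← comp_apply, hcomm, comp_apply, mem_ker.mp hx, map_zero]

theorem map_ker_eq_range_inf_ker_iff_finrank {K V : Type*} [DivisionRing K] [AddCommGroup V]
    [Module K V] [FiniteDimensional K V] {u v : V →ₗ[K] V} (hcomm : u ∘ₗ v = v ∘ₗ u) :
    (ker u).map v = range v ⊓ ker u ↔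
      finrank K (ker u) + finrank K (ker v) + finrank K (range (u ∘ₗ v)) =
        finrank K V + finrank K (ker u ⊓ ker v : Submodule K V) := by
  have hv_ker_u := (ker u).finrank_map_add_finrank_inf_ker v
  have hu_range_v := (range v).finrank_map_add_finrank_inf_ker u
  rw [← range_comp] at hu_range_v
  have hv := finrank_range_add_finrank_ker v
  constructor
  · intro h
    rw [h] at hv_ker_u
    omega
  · intro h
    exact eq_of_le_of_finrank_le (map_ker_le_range_inf_ker_of_comp_comm hcomm) (by omega)

end LinearMap

/-- Symmetry of the strictness condition (Prop. 4.4 of Pantev–Toën):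
for commuting endomorphisms `u v` of a finite-dimensional vector space,
`Im(v|_{ker u}) = Im v ⊓ ker u` iff `Im(u|_{ker v}) = Im u ⊓ ker v`. -/
theorem strictness_symm {k V : Type*} [Field k] [AddCommGroup V] [Module k V]
    [FiniteDimensional k V] (u v : V →ₗ[k] V) (hcomm : u ∘ₗ v = v ∘ₗ u) :
    (Submodule.map v (LinearMap.ker u) = LinearMap.range v ⊓ LinearMap.ker u) ↔
    (Submodule.map u (LinearMap.ker v) = LinearMap.range u ⊓ LinearMap.ker v) := by
  rw [map_ker_eq_range_inf_ker_iff_finrank hcomm, map_ker_eq_range_inf_ker_iff_finrank hcomm.symm,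
    ← hcomm, inf_comm (ker v)]
  omega
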